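/- For all sets C and B, the set functor F defined by FX = C + B × X on sets and Ff = id_C + id_B × f on functions admits exactly one normal lax extension: there is a normal lax extension of F, and any two normal lax extensions of F are equal. -/

import Mathlib

open CategoryTheory Function

universe u

/-- Applicative composition of relations: `relComp s r = s · r`. -/
def relComp {X Y Z : Type u} (s : Y → Z → Prop) (r : X → Y → Prop) : X → Z → Prop :=
  fun x z => ∃ y, r x y ∧ s y z

/-- Converse of a relation. -/
def relConv {X Y : Type u} (r : X → Y → Prop) : Y → X → Prop := fun y x => r x y

/-- Graph relation of a function. -/
def fgraph {X Y : Type u} (f : X → Y) : X → Y → Prop := fun x y => f x = y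

/-- An `F`-relator: a monotone assignment of relations `F X ⇸ F Y` to relations `X ⇸ Y`. -/
structure Relator (F : Type u ⥤ Type u) : Type (u + 1) where
  map : ∀ {X Y : Type u}, (X → Y → Prop) → (F.obj X → F.obj Y → Prop)
  mono : ∀ {X Y : Type u} {r s : X → Y → Prop}, (∀ x y, r x y → s x y) →
    ∀ u v, map r u v → map s u v

/-- `f` is a coalgebra homomorphism from `(X, α)` to `(Y, β)`. -/
def IsCoalgHom (F : Type u ⥤ Type u) {X Y : Type u} (α : X → F.obj X) (β : Y → F.obj Y)
    (f : X → Y) : Prop :=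
  ∀ x, β (f x) = F.map (TypeCat.ofHom f) (α x)

/-- Behavioural equivalence of states. -/
def BehEq (F : Type u ⥤ Type u) {X Y : Type u} (α : X → F.obj X) (β : Y → F.obj Y)
    (x : X) (y : Y) : Prop :=
  ∃ (Z : Type u) (γ : Z → F.obj Z) (f : X → Z) (g : Y → Z),
    IsCoalgHom F α γ f ∧ IsCoalgHom F β γ g ∧ f x = g y

/-- `r` is a `Λ`-simulation from `(X, α)` to `(Y, β)`: `r ≤ β° · Λr · α`. -/
def IsSimulation {F : Type u ⥤ Type u} (Λ : Relator F) {X Y : Type u}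
    (α : X → F.obj X) (β : Y → F.obj Y) (r : X → Y → Prop) : Prop :=
  ∀ x y, r x y → Λ.map r (α x) (β y)

/-- `x` and `y` are `Λ`-similar: related by some `Λ`-simulation. -/
def Similar' {F : Type u ⥤ Type u} (Λ : Relator F) {X Y : Type u}
    (α : X → F.obj X) (β : Y → F.obj Y) (x : X) (y : Y) : Prop :=
  ∃ r, IsSimulation Λ α β r ∧ r x y

/-- `Λ` is a relax extension of `F`: `Ff ≤ Λf` and `(Ff)° ≤ Λ(f°)` for all functions `f`. -/
def IsRelaxExtension (F : Type u ⥤ Type u) (Λ : Relator F) : Prop :=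
  ∀ {X Y : Type u} (f : X → Y),
    (∀ (u : F.obj X) (v : F.obj Y), F.map (TypeCat.ofHom f) u = v → Λ.map (fgraph f) u v) ∧
    (∀ (v : F.obj Y) (u : F.obj X), F.map (TypeCat.ofHom f) u = v → Λ.map (relConv (fgraph f)) v u)

/-- `Λ` is a lax extension of `F`: a relax extension with `Λs · Λr ≤ Λ(s · r)`. -/
def IsLaxExtension (F : Type u ⥤ Type u) (Λ : Relator F) : Prop :=
  IsRelaxExtension F Λ ∧
    ∀ {X Y Z : Type u} (r : X → Y → Prop) (s : Y → Z → Prop)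
      (u : F.obj X) (w : F.obj Z),
      relComp (Λ.map s) (Λ.map r) u w → Λ.map (relComp s r) u w

/-- `Λ` is normal: `Λ1_X = 1_{FX}` for every set `X`. -/
def IsNormal (F : Type u ⥤ Type u) (Λ : Relator F) : Prop :=
  ∀ (X : Type u) (u v : F.obj X), Λ.map (@Eq X) u v ↔ u = v

/-- The functor `X ↦ C + B × X`, `f ↦ id_C + id_B × f`. -/
def machineFunctor (C B : Type u) : Type u ⥤ Type u where
  obj X := C ⊕ B × X
  map f := TypeCat.ofHom (Sum.map id (Prod.map id f))
  map_id := by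
    intro X
    ext x
    cases x <;> rfl
  map_comp := by
    intro X Y Z f g
    ext x
    cases x <;> rfl

/-!
Every lax extension `Λ` contains the Barr extension: a pair related by the Barr lift comes from
a span `X ← R → Y` over `r`, and `Λ` contains `(F π₁)°` and `F π₂`. Conversely, if `Λ` is also
normal and `r ≤ g° · f`, then `Λr ≤ (Fg)° · Ff`. For `FX = C + B × X`, cospans to the point show
that `Λr` only relates elements of the same summand with the same label. Pulling `r` back along
the points `x` and `y` turns `Λr (b, x) (b, y)` into `Λ` of a relation on the point that is empty
unless `r x y`; the empty relation lies below the cospan of the two constants `false`, `true`,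
which `F` does not identify.
-/

namespace IsLaxExtension

variable {F : Type u ⥤ Type u} {Λ : Relator F}

theorem map_eq_of_map_fgraph (hl : IsLaxExtension F Λ) (hn : IsNormal F Λ)
    {X Y : Type u} {f : X → Y} {u : F.obj X} {v : F.obj Y} (h : Λ.map (fgraph f) u v) :
    F.map (TypeCat.ofHom f) u = v := by
  have hconv : Λ.map (relConv (fgraph f)) (F.map (TypeCat.ofHom f) u) u := (hl.1 f).2 _ u rfl
  have hcomp := hl.2 _ _ _ _ ⟨u, hconv, h⟩
  refine (hn Y _ _).1 (Λ.mono ?_ _ _ hcomp)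
  rintro y y' ⟨x, hxy, hxy'⟩
  exact hxy.symm.trans hxy'

theorem map_eq_of_le_cospan (hl : IsLaxExtension F Λ) (hn : IsNormal F Λ)
    {X Y Z : Type u} {r : X → Y → Prop} (f : X → Z) (g : Y → Z)
    (hr : ∀ x y, r x y → f x = g y) {u : F.obj X} {v : F.obj Y} (h : Λ.map r u v) :
    F.map (TypeCat.ofHom f) u = F.map (TypeCat.ofHom g) v := by
  have hg : Λ.map (fgraph g) v (F.map (TypeCat.ofHom g) v) := (hl.1 g).1 v _ rfl
  have hcomp := hl.2 _ _ _ _ ⟨v, h, hg⟩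
  refine hl.map_eq_of_map_fgraph hn (Λ.mono ?_ _ _ hcomp)
  rintro x z ⟨y, hxy, hyz⟩
  exact (hr x y hxy).trans hyz

theorem map_of_span (hl : IsLaxExtension F Λ) {X Y : Type u} {r : X → Y → Prop}
    (w : F.obj {p : X × Y // r p.1 p.2}) :
    Λ.map r (F.map (TypeCat.ofHom fun p => p.1.1) w) (F.map (TypeCat.ofHom fun p => p.1.2) w) := by
  have hfst := (hl.1 fun p : {p : X × Y // r p.1 p.2} => p.1.1).2 _ w rfl
  have hsnd := (hl.1 fun p : {p : X × Y // r p.1 p.2} => p.1.2).1 w _ rfl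
  refine Λ.mono ?_ _ _ (hl.2 _ _ _ _ ⟨w, hfst, hsnd⟩)
  rintro x y ⟨p, rfl, rfl⟩
  exact p.2

theorem map_comap (hl : IsLaxExtension F Λ) {X Y X' Y' : Type u} {r : X → Y → Prop}
    (f : X' → X) (g : Y' → Y) {u : F.obj X'} {v : F.obj Y'}
    (h : Λ.map r (F.map (TypeCat.ofHom f) u) (F.map (TypeCat.ofHom g) v)) :
    Λ.map (fun a c => r (f a) (g c)) u v := by
  have hf := (hl.1 f).1 u _ rfl
  have hg := (hl.1 g).2 _ v rfl
  have hcomp := hl.2 _ _ _ _ ⟨_, hl.2 _ _ _ _ ⟨_, hf, h⟩, hg⟩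
  refine Λ.mono ?_ _ _ hcomp
  rintro a c ⟨y, ⟨x, rfl, hxy⟩, rfl⟩
  exact hxy

end IsLaxExtension

section Machine

variable {C B : Type u}

variable (C B) in
def machineBarr : Relator (machineFunctor C B) where
  map r u v :=
    match u, v with
    | Sum.inl c, Sum.inl c' => c = c'
    | Sum.inr (b, x), Sum.inr (b', y) => b = b' ∧ r x y
    | _, _ => False
  mono h u v := by
    rcases u with c | ⟨b, x⟩ <;> rcases v with c' | ⟨b', y⟩
    · exact id
    · exact id
    · exact id
    · exact And.imp_right (h x y)

theorem machineBarr_isLaxExtension : IsLaxExtension (machineFunctor C B) (machineBarr C B) := by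
  refine ⟨fun f => ⟨?_, ?_⟩, ?_⟩
  · rintro (c | ⟨b, x⟩) _ rfl
    exacts [rfl, ⟨rfl, rfl⟩]
  · rintro _ (c | ⟨b, x⟩) rfl
    exacts [rfl, ⟨rfl, rfl⟩]
  · rintro X Y Z r s (c | ⟨b, x⟩) (c'' | ⟨b'', z⟩) ⟨c' | ⟨b', y⟩, h₁, h₂⟩ <;>
      first
      | exact h₁.elim
      | exact h₂.elim
      | exact (h₁ : c = c').trans h₂
      | exact ⟨h₁.1.trans h₂.1, y, h₁.2, h₂.2⟩

theorem machineBarr_isNormal : IsNormal (machineFunctor C B) (machineBarr C B) := by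
  rintro X (c | ⟨b, x⟩) (c' | ⟨b', y⟩)
  · exact Sum.inl_injective.eq_iff.symm
  · exact iff_of_false id Sum.inl_ne_inr
  · exact iff_of_false id Sum.inr_ne_inl
  · exact ⟨fun ⟨hb, hxy⟩ => hb ▸ hxy ▸ rfl, fun h => Prod.ext_iff.1 (Sum.inr.inj h)⟩

variable {Λ : Relator (machineFunctor C B)}

theorem IsLaxExtension.machineBarr_le (hl : IsLaxExtension (machineFunctor C B) Λ)
    {X Y : Type u} {r : X → Y → Prop} {u : C ⊕ B × X} {v : C ⊕ B × Y}
    (h : (machineBarr C B).map r u v) : Λ.map r u v := by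
  rcases u with c | ⟨b, x⟩ <;> rcases v with c' | ⟨b', y⟩
  · obtain rfl : c = c' := h
    exact hl.map_of_span (Sum.inl c)
  · exact h.elim
  · exact h.elim
  · obtain ⟨rfl, hxy⟩ := h
    exact hl.map_of_span (Sum.inr (b, ⟨(x, y), hxy⟩))

theorem IsLaxExtension.le_machineBarr (hl : IsLaxExtension (machineFunctor C B) Λ)
    (hn : IsNormal (machineFunctor C B) Λ) {X Y : Type u} {r : X → Y → Prop}
    {u : C ⊕ B × X} {v : C ⊕ B × Y} (h : Λ.map r u v) : (machineBarr C B).map r u v := by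
  have hshape := hl.map_eq_of_le_cospan hn (fun _ => PUnit.unit.{u + 1}) (fun _ => PUnit.unit)
    (fun _ _ _ => rfl) h
  rcases u with c | ⟨b, x⟩ <;> rcases v with c' | ⟨b', y⟩
  · exact Sum.inl.inj hshape
  · exact Sum.inl_ne_inr hshape
  · exact Sum.inr_ne_inl hshape
  obtain rfl : b = b' := congrArg Prod.fst (Sum.inr.inj hshape)
  refine ⟨rfl, by_contra fun hxy => ?_⟩
  have hpoint := hl.map_comap (u := Sum.inr (b, PUnit.unit.{u + 1})) (v := Sum.inr (b, PUnit.unit))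
    (fun _ => x) (fun _ => y) h
  have hsep := hl.map_eq_of_le_cospan hn (fun _ => ULift.up.{u} false) (fun _ => ULift.up true)
    (fun _ _ hr => (hxy hr).elim) hpoint
  exact Bool.false_ne_true (congrArg (ULift.down ∘ Prod.snd) (Sum.inr.inj hsep))

theorem IsLaxExtension.map_iff_machineBarr (hl : IsLaxExtension (machineFunctor C B) Λ)
    (hn : IsNormal (machineFunctor C B) Λ) {X Y : Type u} (r : X → Y → Prop)
    (u : C ⊕ B × X) (v : C ⊕ B × Y) : Λ.map r u v ↔ (machineBarr C B).map r u v :=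
  ⟨hl.le_machineBarr hn, hl.machineBarr_le⟩

end Machine

/-- For all sets `C` and `B`, the functor `FX = C + B × X` admits
exactly one normal lax extension: one exists, and any two are equal. -/
theorem stmt17 (C B : Type u) :
    (∃ Λ : Relator (machineFunctor C B),
      IsLaxExtension (machineFunctor C B) Λ ∧ IsNormal (machineFunctor C B) Λ)
    ∧
    (∀ Λ Λ' : Relator (machineFunctor C B),
      IsLaxExtension (machineFunctor C B) Λ → IsNormal (machineFunctor C B) Λ →
      IsLaxExtension (machineFunctor C B) Λ' → IsNormal (machineFunctor C B) Λ' →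
      ∀ (X Y : Type u) (r : X → Y → Prop)
        (u : (machineFunctor C B).obj X) (v : (machineFunctor C B).obj Y),
        Λ.map r u v ↔ Λ'.map r u v) := by
  refine ⟨⟨machineBarr C B, machineBarr_isLaxExtension, machineBarr_isNormal⟩, ?_⟩
  intro Λ Λ' hl hn hl' hn' X Y r u v
  exact (hl.map_iff_machineBarr hn r u v).trans (hl'.map_iff_machineBarr hn' r u v).symm
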